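/- Let Q₃ be the cube graph: the graph whose vertices are the binary strings of length 3 (equivalently, elements of {0,1}³), with two vertices adjacent if and only if they differ in exactly one coordinate. Then χ_DP(Q₃) = 3, α₂^{DP}(Q₃) = 5, and Q₃ is not partially DP-nice (since 5 < 2·8/3). -/

import Mathlib

open SimpleGraph

/-- `DPCover G H L` means `(L, H)` is a cover of the graph `G`:
(1) the sets `L u` partition `V(H)`; (2) each `H[L u]` is complete;
(3) for each edge `uv` of `G`, the edges of `H` between `L u` and `L v` form a matching;
(4) there are no edges of `H` between lists of distinct non-adjacent vertices. -/
structure DPCover {V : Type} (G : SimpleGraph V) {W : Type} (H : SimpleGraph W)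
    (L : V → Finset W) : Prop where
  partition : ∀ w : W, ∃! v : V, w ∈ L v
  cliques : ∀ v : V, ∀ a ∈ L v, ∀ b ∈ L v, a ≠ b → H.Adj a b
  matching : ∀ ⦃u v : V⦄, G.Adj u v → ∀ a ∈ L u, ∀ b ∈ L v, ∀ b' ∈ L v,
      H.Adj a b → H.Adj a b' → b = b'
  nonadj : ∀ ⦃u v : V⦄, u ≠ v → ¬ G.Adj u v → ∀ a ∈ L u, ∀ b ∈ L v, ¬ H.Adj a b

/-- A finset is independent in `H` if no two of its elements are adjacent. -/
def IsIndepFinset {W : Type} (H : SimpleGraph W) (S : Finset W) : Prop :=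
  ∀ a ∈ S, ∀ b ∈ S, ¬ H.Adj a b

/-- The independence number of `H`. -/
noncomputable def indepNum {W : Type} [Fintype W] (H : SimpleGraph W) : ℕ :=
  sSup {n : ℕ | ∃ S : Finset W, IsIndepFinset H S ∧ S.card = n}

/-- The DP-chromatic number of `G`: the least `m` such that every `m`-fold cover `(L, H)`
of `G` admits an `H`-coloring, i.e. an independent set in `H` of size `|V(G)|`. -/
noncomputable def chiDP {V : Type} [Fintype V] (G : SimpleGraph V) : ℕ :=
  sInf {m : ℕ | ∀ (W : Type) (_ : Fintype W) (H : SimpleGraph W) (L : V → Finset W),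
    DPCover G H L → (∀ v, (L v).card = m) →
    ∃ S : Finset W, IsIndepFinset H S ∧ S.card = Fintype.card V}

/-- The partial DP `t`-chromatic number of `G`: the minimum of the independence number
`α(H)` over all `t`-fold covers `(L, H)` of `G`. -/
noncomputable def alphaDP {V : Type} [Fintype V] (G : SimpleGraph V) (t : ℕ) : ℕ :=
  sInf {n : ℕ | ∃ (W : Type) (_ : Fintype W) (H : SimpleGraph W) (L : V → Finset W),
    DPCover G H L ∧ (∀ v, (L v).card = t) ∧ _root_.indepNum H = n}

/-- A graph `G` is partially DP-nice if `α_t^{DP}(G) ≥ t|V(G)|/χ_DP(G)` for all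
`t ∈ {1, …, χ_DP(G)}`. -/
def PartiallyDPNice {V : Type} [Fintype V] (G : SimpleGraph V) : Prop :=
  ∀ t : ℕ, 1 ≤ t → t ≤ chiDP G →
    (t * Fintype.card V : ℚ) / (chiDP G : ℚ) ≤ (alphaDP G t : ℚ)

/-- The cube graph `Q₃`: vertices are binary strings of length 3, adjacent iff they
differ in exactly one coordinate. -/
def cubeGraph : SimpleGraph (Fin 3 → Bool) where
  Adj x y := ∃! i : Fin 3, x i ≠ y i
  symm := by
    constructor
    rintro x y ⟨i, hi, hu⟩
    exact ⟨i, hi.symm, fun j hj => hu j hj.symm⟩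
  loopless := by
    constructor
    rintro x ⟨i, hi, _⟩
    exact hi rfl


/-!
For `χ_DP(Q₃) ≤ 3`, colour the two neighbours `100` and `010` of `000` first, so that together
they forbid at most one colour at `000`: if the colour chosen at `100` forbids `z`, some colour
of `010` forbids nothing but `z`, for otherwise the three colours of `010` would be matched
injectively into the two other colours of `000`. Then colour `110, 111, 101, 011, 001` greedily
(each has at most two coloured neighbours) and finally `000`, which loses at most two colours.

For the lower bounds, twist the trivial 2-fold cover along three edges meeting every face
exactly once. Then every face and every hexagon `Q₃ - {v, v̄}` is unbalanced, so no independent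
set meets all fibres over it; as any six vertices of `Q₃` contain a face or such a hexagon, this
cover has `α = 5 < 8`. Conversely, in any 2-fold cover the star at `111` together with `000`
induces a forest, which is greedily coloured, so `α₂^{DP}(Q₃) = 5 < 2 · 8 / 3`.
-/

open Finset

instance : DecidableRel cubeGraph.Adj := fun x y =>
  inferInstanceAs (Decidable (∃ i, x i ≠ y i ∧ ∀ j, x j ≠ y j → j = i))

section DPNumbers

theorem IsIndepFinset.card_le_indepNum {W : Type} [Fintype W] {H : SimpleGraph W}
    {S : Finset W} (hS : IsIndepFinset H S) : S.card ≤ _root_.indepNum H :=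
  le_csSup ⟨Fintype.card W, by rintro _ ⟨T, -, rfl⟩; exact card_le_univ T⟩ ⟨S, hS, rfl⟩

theorem indepNum_le_of_forall {W : Type} [Fintype W] {H : SimpleGraph W} {n : ℕ}
    (h : ∀ S, IsIndepFinset H S → S.card ≤ n) : _root_.indepNum H ≤ n :=
  csSup_le ⟨0, ∅, by simp [IsIndepFinset], rfl⟩ (by rintro _ ⟨S, hS, rfl⟩; exact h S hS)

variable {V : Type} [Fintype V] {G : SimpleGraph V}

theorem chiDP_eq_of {k : ℕ}
    (hcol : ∀ (W : Type) (_ : Fintype W) (H : SimpleGraph W) (L : V → Finset W),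
      DPCover G H L → (∀ v, (L v).card = k) →
      ∃ S : Finset W, IsIndepFinset H S ∧ S.card = Fintype.card V)
    (hbad : ∀ m < k, ∃ (W : Type) (_ : Fintype W) (H : SimpleGraph W) (L : V → Finset W),
      DPCover G H L ∧ (∀ v, (L v).card = m) ∧
      ¬ ∃ S : Finset W, IsIndepFinset H S ∧ S.card = Fintype.card V) :
    chiDP G = k := by
  refine le_antisymm (Nat.sInf_le hcol) (le_csInf ⟨k, hcol⟩ fun m hm => not_lt.1 fun hmk => ?_)
  obtain ⟨W, _, H, L, C, hL, hno⟩ := hbad m hmk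
  exact hno (hm W ‹_› H L C hL)

theorem alphaDP_eq_of {t n : ℕ}
    (hbad : ∃ (W : Type) (_ : Fintype W) (H : SimpleGraph W) (L : V → Finset W),
      DPCover G H L ∧ (∀ v, (L v).card = t) ∧ ∀ S, IsIndepFinset H S → S.card ≤ n)
    (hindep : ∀ (W : Type) (_ : Fintype W) (H : SimpleGraph W) (L : V → Finset W),
      DPCover G H L → (∀ v, (L v).card = t) → ∃ S : Finset W, IsIndepFinset H S ∧ S.card = n) :
    alphaDP G t = n := by
  obtain ⟨W, _, H, L, C, hL, hle⟩ := hbad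
  refine le_antisymm ?_ (le_csInf ⟨_root_.indepNum H, W, _, H, L, C, hL, rfl⟩ ?_)
  · calc alphaDP G t ≤ _root_.indepNum H := Nat.sInf_le ⟨W, _, H, L, C, hL, rfl⟩
      _ ≤ n := indepNum_le_of_forall hle
  rintro _ ⟨W', _, H', L', C', hL', rfl⟩
  obtain ⟨S, hS, rfl⟩ := hindep W' ‹_› H' L' C' hL'
  exact hS.card_le_indepNum

end DPNumbers

section Covers

variable {V W : Type} {G : SimpleGraph V} {H : SimpleGraph W} {L : V → Finset W}

theorem dpCover_empty : DPCover G (⊥ : SimpleGraph Empty) fun _ => ∅ :=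
  ⟨fun w => w.elim, by simp, by simp, by simp⟩

theorem dpCover_self : DPCover G G fun v => {v} where
  partition w := ⟨w, mem_singleton_self w, fun _ h => (mem_singleton.1 h).symm⟩
  cliques v a ha b hb hab := absurd ((mem_singleton.1 ha).trans (mem_singleton.1 hb).symm) hab
  matching _ _ _ _ _ b hb b' hb' _ _ := (mem_singleton.1 hb).trans (mem_singleton.1 hb').symm
  nonadj _ _ _ h a ha b hb := by rwa [mem_singleton.1 ha, mem_singleton.1 hb]

namespace DPCover

variable (C : DPCover G H L)
include C

theorem card_filter_adj_le_one [DecidableRel H.Adj] {u v : V} (huv : u ≠ v) {a : W}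
    (ha : a ∈ L u) : ((L v).filter (H.Adj a)).card ≤ 1 := by
  refine card_le_one.2 fun b hb b' hb' => ?_
  rw [mem_filter] at hb hb'
  by_cases hG : G.Adj u v
  · exact C.matching hG a ha b hb.1 b' hb'.1 hb.2 hb'.2
  · exact absurd hb.2 (C.nonadj huv hG a ha b hb.1)

theorem exists_mem_forall_adj_eq {y v : V} (hyv : G.Adj y v) (hcard : (L v).card ≤ (L y).card)
    {z : W} (hz : z ∈ L v) : ∃ b ∈ L y, ∀ z' ∈ L v, H.Adj b z' → z' = z := by
  classical
  by_contra! h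
  choose! f hfL hfadj hfz using h
  have hinj : Set.InjOn f (L y) := fun b hb b' hb' hbb' =>
    C.matching hyv.symm (f b) (hfL b hb) b hb b' hb' (hfadj b hb).symm
      (hbb' ▸ (hfadj b' hb').symm)
  have := card_le_card_of_injOn f (fun b hb => mem_erase.2 ⟨hfz b hb, hfL b hb⟩) hinj
  rw [card_erase_of_mem hz] at this
  have := card_pos.2 ⟨z, hz⟩
  omega

theorem exists_pair_card_filter_adj_le_one [DecidableRel H.Adj] {x y v : V} (hxv : G.Adj x v)
    (hyv : G.Adj y v) (hx : (L x).Nonempty) (hv : (L v).Nonempty)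
    (hcard : (L v).card ≤ (L y).card) :
    ∃ a ∈ L x, ∃ b ∈ L y, ((L v).filter fun z => H.Adj a z ∨ H.Adj b z).card ≤ 1 := by
  obtain ⟨a, ha⟩ := hx
  by_cases haz : ∃ z ∈ L v, H.Adj a z
  · obtain ⟨z, hz, haz⟩ := haz
    obtain ⟨b, hb, hbz⟩ := C.exists_mem_forall_adj_eq hyv hcard hz
    have hfilter : ∀ z' ∈ (L v).filter fun z => H.Adj a z ∨ H.Adj b z, z' = z := by
      intro z' hz'
      rw [mem_filter] at hz'
      rcases hz'.2 with h | h
      · exact C.matching hxv a ha z' hz'.1 z hz h haz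
      · exact hbz z' hz'.1 h
    exact ⟨a, ha, b, hb,
      card_le_one.2 fun z₁ h₁ z₂ h₂ => (hfilter z₁ h₁).trans (hfilter z₂ h₂).symm⟩
  · push Not at haz
    obtain ⟨b, hb⟩ := card_pos.1 (hv.card_pos.trans_le hcard)
    refine ⟨a, ha, b, hb,
      (card_le_card fun z hz => ?_).trans (C.card_filter_adj_le_one hyv.ne hb)⟩
    rw [mem_filter] at hz ⊢
    exact ⟨hz.1, hz.2.resolve_left (haz z hz.1)⟩

end DPCover

end Covers

section PartialColorings

variable {V W : Type} {G : SimpleGraph V} {H : SimpleGraph W} {L : V → Finset W}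

structure IsPartialDPColoring (H : SimpleGraph W) (L : V → Finset W) (s : Finset V) (c : V → W) :
    Prop where
  mem : ∀ v ∈ s, c v ∈ L v
  not_adj : ∀ u ∈ s, ∀ v ∈ s, ¬ H.Adj (c u) (c v)

def forbiddenColors (H : SimpleGraph W) [DecidableRel H.Adj] (L : V → Finset W) (c : V → W)
    (s : Finset V) (v : V) : Finset W :=
  (L v).filter fun z => ∃ u ∈ s, H.Adj (c u) z

theorem card_forbiddenColors_le_add [DecidableRel H.Adj] [DecidableEq V] (c : V → W)
    (s t : Finset V) (v : V) :
    (forbiddenColors H L c s v).card ≤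
      (forbiddenColors H L c t v).card + (forbiddenColors H L c (s \ t) v).card := by
  classical
  refine (card_le_card fun z hz => ?_).trans (card_union_le _ _)
  simp only [forbiddenColors, mem_union, mem_filter, mem_sdiff] at hz ⊢
  obtain ⟨hzL, u, hu, huz⟩ := hz
  by_cases hut : u ∈ t
  exacts [Or.inl ⟨hzL, u, hut, huz⟩, Or.inr ⟨hzL, u, ⟨hu, hut⟩, huz⟩]

def IsGreedyOrder [DecidableEq V] (G : SimpleGraph V) [DecidableRel G.Adj] (k : ℕ) :
    Finset V → List V → Prop
  | _, [] => True
  | s, v :: l => v ∉ s ∧ (s.filter (G.Adj · v)).card < k ∧ IsGreedyOrder G k (insert v s) l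

instance IsGreedyOrder.instDecidable [DecidableEq V] [DecidableRel G.Adj] (k : ℕ) :
    ∀ s l, Decidable (IsGreedyOrder G k s l)
  | _, [] => isTrue trivial
  | s, v :: l =>
    haveI := IsGreedyOrder.instDecidable k (insert v s) l
    inferInstanceAs (Decidable (_ ∧ _ ∧ _))

namespace IsPartialDPColoring

theorem empty (c : V → W) : IsPartialDPColoring H L ∅ c :=
  ⟨by simp, by simp⟩

variable {s : Finset V} {c : V → W}

theorem mono {t : Finset V} (hc : IsPartialDPColoring H L s c) (hts : t ⊆ s) :
    IsPartialDPColoring H L t c :=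
  ⟨fun v hv => hc.mem v (hts hv), fun u hu v hv => hc.not_adj u (hts hu) v (hts hv)⟩

theorem exists_isIndepFinset (C : DPCover G H L) (hc : IsPartialDPColoring H L s c) :
    ∃ S : Finset W, IsIndepFinset H S ∧ S.card = s.card := by
  classical
  refine ⟨s.image c, ?_, card_image_of_injOn fun u hu v hv huv => ?_⟩
  · simp only [IsIndepFinset, mem_image]
    rintro _ ⟨u, hu, rfl⟩ _ ⟨v, hv, rfl⟩
    exact hc.not_adj u hu v hv
  · exact (C.partition (c u)).unique (hc.mem u hu) (huv ▸ hc.mem v hv)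

theorem card_forbiddenColors_le [DecidableRel G.Adj] [DecidableRel H.Adj] (C : DPCover G H L)
    (hc : IsPartialDPColoring H L s c) {v : V} (hv : v ∉ s) :
    (forbiddenColors H L c s v).card ≤ (s.filter (G.Adj · v)).card := by
  classical
  calc (forbiddenColors H L c s v).card
      ≤ ((s.filter (G.Adj · v)).biUnion fun u => (L v).filter (H.Adj (c u))).card := by
        refine card_le_card fun z hz => ?_
        obtain ⟨hzL, u, hu, huz⟩ := mem_filter.1 hz
        have huv : G.Adj u v := by
          by_contra h
          exact C.nonadj (ne_of_mem_of_not_mem hu hv) h _ (hc.mem u hu) z hzL huz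
        exact mem_biUnion.2 ⟨u, mem_filter.2 ⟨hu, huv⟩, mem_filter.2 ⟨hzL, huz⟩⟩
    _ ≤ ∑ u ∈ s.filter (G.Adj · v), ((L v).filter (H.Adj (c u))).card := card_biUnion_le
    _ ≤ ∑ _u ∈ s.filter (G.Adj · v), 1 := sum_le_sum fun u hu =>
        C.card_filter_adj_le_one (mem_filter.1 hu).2.ne (hc.mem u (mem_filter.1 hu).1)
    _ = (s.filter (G.Adj · v)).card := by simp

theorem update [DecidableEq V] [DecidableRel H.Adj] (hc : IsPartialDPColoring H L s c) {v : V}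
    {z : W} (hz : z ∈ L v) (hfree : z ∉ forbiddenColors H L c s v) :
    IsPartialDPColoring H L (insert v s) (Function.update c v z) := by
  simp only [forbiddenColors, mem_filter, not_and, not_exists] at hfree
  have hfree := hfree hz
  constructor
  · intro u hu
    rcases eq_or_ne u v with rfl | huv
    · simpa using hz
    · simpa [huv] using hc.mem u ((mem_insert.1 hu).resolve_left huv)
  · intro u hu u' hu'
    rw [mem_insert] at hu hu'
    simp only [Function.update_apply]
    split_ifs with hu₁ hu₂ hu₂
    · exact H.loopless.irrefl z
    · exact fun h => hfree u' (hu'.resolve_left hu₂) h.symm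
    · exact hfree u (hu.resolve_left hu₁)
    · exact hc.not_adj u (hu.resolve_left hu₁) u' (hu'.resolve_left hu₂)

theorem _root_.DPCover.isPartialDPColoring_pair [DecidableEq V] (C : DPCover G H L) {x y : V}
    (hxy : x ≠ y) (hnadj : ¬ G.Adj x y) {a b : W} (ha : a ∈ L x) (hb : b ∈ L y) :
    IsPartialDPColoring H L {x, y} fun u => if u = x then a else b := by
  have hab : ¬ H.Adj a b := C.nonadj hxy hnadj a ha b hb
  refine ⟨by simp [hxy.symm, ha, hb], ?_⟩
  simp only [mem_insert, mem_singleton]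
  rintro u (rfl | rfl) u' (rfl | rfl) <;> simp only [hxy.symm, if_true, if_false]
  exacts [H.loopless.irrefl a, hab, fun h => hab h.symm, H.loopless.irrefl b]

theorem exists_update [DecidableEq V] [DecidableRel H.Adj] (hc : IsPartialDPColoring H L s c)
    {v : V} (h : (forbiddenColors H L c s v).card < (L v).card) :
    ∃ z, IsPartialDPColoring H L (insert v s) (Function.update c v z) :=
  let ⟨z, hz, hfree⟩ := exists_mem_notMem_of_card_lt_card h
  ⟨z, hc.update hz hfree⟩

theorem exists_extend_of_isGreedyOrder [DecidableEq V] [DecidableRel G.Adj] [DecidableRel H.Adj]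
    (C : DPCover G H L) {k : ℕ} (hk : ∀ v, k ≤ (L v).card) (l : List V)
    (hc : IsPartialDPColoring H L s c) (hl : IsGreedyOrder G k s l) :
    ∃ c', IsPartialDPColoring H L (s ∪ l.toFinset) c' ∧ ∀ u ∈ s, c' u = c u := by
  induction l generalizing s c with
  | nil => exact ⟨c, by simpa using hc, fun _ _ => rfl⟩
  | cons v l ih =>
    obtain ⟨hv, hdeg, hl⟩ := hl
    obtain ⟨z, hz⟩ := hc.exists_update ((hc.card_forbiddenColors_le C hv).trans_lt
      (hdeg.trans_le (hk v)))
    obtain ⟨c', hc', hc'z⟩ := ih hz hl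
    refine ⟨c', by simpa using hc', fun u hu => ?_⟩
    rw [hc'z u (mem_insert_of_mem hu), Function.update_of_ne (ne_of_mem_of_not_mem hu hv)]

end IsPartialDPColoring

end PartialColorings

section TwistedCover

variable {V : Type}

/-- Over an edge `e = uv` the lifts `(u, i)` and `(v, j)` are joined when `i + j = σ e`: the
edge is lifted straight (as in ordinary colouring) when `σ e = 0` and crossed when `σ e = 1`. -/
def twistedCover (G : SimpleGraph V) (σ : Sym2 V → ZMod 2) : SimpleGraph (V × ZMod 2) where
  Adj p q := (p.1 = q.1 ∧ p.2 ≠ q.2) ∨ (G.Adj p.1 q.1 ∧ p.2 + q.2 = σ s(p.1, q.1))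
  symm := by
    constructor
    rintro p q (⟨h₁, h₂⟩ | ⟨h₁, h₂⟩)
    · exact Or.inl ⟨h₁.symm, h₂.symm⟩
    · exact Or.inr ⟨h₁.symm, by rwa [add_comm, Sym2.eq_swap]⟩
  loopless := ⟨fun p h => h.elim (fun h => h.2 rfl) fun h => G.loopless.irrefl _ h.1⟩

variable {G : SimpleGraph V}

theorem dpCover_twistedCover (σ : Sym2 V → ZMod 2) :
    DPCover G (twistedCover G σ) fun v => {v} ×ˢ univ where
  partition p := ⟨p.1, by simp, fun v hv => by
    simp only [mem_product, mem_singleton, mem_univ, and_true] at hv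
    exact hv.symm⟩
  cliques v a ha b hb hab := by
    simp only [mem_product, mem_singleton] at ha hb
    exact Or.inl ⟨ha.1.trans hb.1.symm, fun h => hab (Prod.ext (ha.1.trans hb.1.symm) h)⟩
  matching u v huv a ha b hb b' hb' hab hab' := by
    simp only [mem_product, mem_singleton] at ha hb hb'
    simp only [twistedCover, ha.1, hb.1, hb'.1, huv.ne, false_and, false_or] at hab hab'
    exact Prod.ext (hb.1.trans hb'.1.symm) (add_left_cancel (hab.2.trans hab'.2.symm))
  nonadj u v huv hG a ha b hb := by
    simp only [mem_product, mem_singleton] at ha hb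
    simp [twistedCover, ha.1, hb.1, huv, hG]

theorem card_twistedCover_fiber (v : V) : ({v} ×ˢ (univ : Finset (ZMod 2))).card = 2 := by
  simp

theorem card_image_fst_of_isIndepFinset [DecidableEq V] {σ : Sym2 V → ZMod 2}
    {S : Finset (V × ZMod 2)} (hS : IsIndepFinset (twistedCover G σ) S) :
    (S.image Prod.fst).card = S.card :=
  card_image_of_injOn fun p hp q hq hpq =>
    Prod.ext hpq (not_not.1 fun h => hS p hp q hq (Or.inl ⟨hpq, h⟩))

/-- If `S` met every fibre over the closed walk, choosing the level of `S` in each fibre would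
give differences that telescope to `0` along the walk, while independence forces each of them
to be `σ + 1`. -/
theorem IsIndepFinset.exists_notMem_image_fst {σ : Sym2 V → ZMod 2} [DecidableEq V]
    {S : Finset (V × ZMod 2)} (hS : IsIndepFinset (twistedCover G σ) S) {c : ℕ → V} {n : ℕ}
    (hcn : c n = c 0) (hadj : ∀ i < n, G.Adj (c i) (c (i + 1)))
    (hodd : ∑ i ∈ range n, (σ s(c i, c (i + 1)) + 1) = 1) :
    ∃ i < n, c i ∉ S.image Prod.fst := by
  classical
  by_contra! hmem
  set f : V → ZMod 2 := fun v => if (v, 1) ∈ S then 1 else 0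
  have hf : ∀ v ∈ S.image Prod.fst, (v, f v) ∈ S := by
    intro v hv
    obtain ⟨⟨w, j⟩, hwj, rfl⟩ := mem_image.1 hv
    by_cases h : (w, 1) ∈ S
    · simp [f, h]
    · have hj : j = 0 := by
        fin_cases j
        · rfl
        · exact absurd hwj h
      simpa [f, h, hj] using hwj
  have hn : 0 < n := Nat.pos_of_ne_zero fun h => by simp [h] at hodd
  have hstep : ∀ i < n, f (c (i + 1)) - f (c i) = σ s(c i, c (i + 1)) + 1 := by
    intro i hi
    have hi' : c (i + 1) ∈ S.image Prod.fst := by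
      rcases (Nat.succ_le_of_lt hi).lt_or_eq with h | h
      · exact hmem _ h
      · rw [show i + 1 = n from h, hcn]
        exact hmem 0 hn
    have := hS _ (hf _ (hmem i hi)) _ (hf _ hi')
    simp only [twistedCover, hadj i hi, (hadj i hi).ne, false_and, true_and, false_or] at this
    generalize f (c i) = a, f (c (i + 1)) = b, σ s(c i, c (i + 1)) = e at this ⊢
    revert a b e
    decide
  have := sum_range_sub (fun i => f (c i)) n
  rw [sum_congr rfl fun i hi => hstep i (mem_range.1 hi), hodd, hcn, sub_self] at this
  exact one_ne_zero this

end TwistedCover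

section Cube

def cubeVertex (n : ℕ) : Fin 3 → Bool := fun i => n.testBit i

theorem card_cube_vertices : Fintype.card (Fin 3 → Bool) = 8 := rfl

section Coloring

variable {W : Type} {H : SimpleGraph W} {L : (Fin 3 → Bool) → Finset W}

theorem cubeGraph_exists_coloring (C : DPCover cubeGraph H L) (hL : ∀ v, (L v).card = 3) :
    ∃ S : Finset W, IsIndepFinset H S ∧ S.card = Fintype.card (Fin 3 → Bool) := by
  classical
  have hne : ∀ v, (L v).Nonempty := fun v => card_pos.1 (by rw [hL]; norm_num)
  obtain ⟨a, ha, b, hb, hab⟩ := C.exists_pair_card_filter_adj_le_one (x := cubeVertex 1)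
    (y := cubeVertex 2) (v := cubeVertex 0) (by decide) (by decide) (hne _) (hne _)
    (by rw [hL, hL])
  have h21 : cubeVertex 2 ≠ cubeVertex 1 := by decide
  have hc := C.isPartialDPColoring_pair h21.symm (by decide) ha hb
  obtain ⟨c', hc', hc'c⟩ := hc.exists_extend_of_isGreedyOrder C (k := 3) (fun v => (hL v).ge)
    ([3, 7, 5, 6, 4].map cubeVertex) (by decide)
  set s := ({cubeVertex 1, cubeVertex 2} : Finset _) ∪ ([3, 7, 5, 6, 4].map cubeVertex).toFinset
  have hpair : forbiddenColors H L c' {cubeVertex 1, cubeVertex 2} (cubeVertex 0) =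
      (L (cubeVertex 0)).filter fun z => H.Adj a z ∨ H.Adj b z := by
    simp [forbiddenColors, hc'c, h21]
  have hforb : (forbiddenColors H L c' s (cubeVertex 0)).card < (L (cubeVertex 0)).card :=
    calc (forbiddenColors H L c' s (cubeVertex 0)).card
        ≤ (forbiddenColors H L c' {cubeVertex 1, cubeVertex 2} (cubeVertex 0)).card +
          (forbiddenColors H L c' (s \ {cubeVertex 1, cubeVertex 2}) (cubeVertex 0)).card :=
          card_forbiddenColors_le_add _ _ _ _
      _ ≤ 1 + ((s \ {cubeVertex 1, cubeVertex 2}).filter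
            (cubeGraph.Adj · (cubeVertex 0))).card :=
          add_le_add (hpair ▸ hab)
            ((hc'.mono sdiff_subset).card_forbiddenColors_le C (by decide))
      _ < (L (cubeVertex 0)).card := by rw [hL]; decide
  obtain ⟨z, hz⟩ := hc'.exists_update hforb
  obtain ⟨S, hS, hcard⟩ := hz.exists_isIndepFinset C
  exact ⟨S, hS, hcard.trans (by decide)⟩

theorem cubeGraph_exists_isIndepFinset_card_five (C : DPCover cubeGraph H L)
    (hL : ∀ v, 2 ≤ (L v).card) : ∃ S : Finset W, IsIndepFinset H S ∧ S.card = 5 := by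
  classical
  obtain ⟨w, -⟩ := card_pos.1 (two_pos.trans_le (hL (cubeVertex 0)))
  have hc₀ : IsPartialDPColoring H L ∅ fun _ => w := .empty _
  obtain ⟨c, hc, -⟩ := hc₀.exists_extend_of_isGreedyOrder C hL ([7, 3, 5, 6, 0].map cubeVertex)
    (by decide)
  obtain ⟨S, hS, hcard⟩ := hc.exists_isIndepFinset C
  exact ⟨S, hS, hcard.trans (by decide)⟩

end Coloring

/-- Every face of the cube contains exactly one of these three edges. -/
def cubeTwist (e : Sym2 (Fin 3 → Bool)) : ZMod 2 :=
  if e ∈ ({s(cubeVertex 0, cubeVertex 1), s(cubeVertex 3, cubeVertex 7),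
    s(cubeVertex 4, cubeVertex 6)} : Finset _) then 1 else 0

/-- The six faces and the four hexagons `Q₃ - {v, v̄}`, each listed cyclically by the numbers
`n` of its vertices `cubeVertex n`. -/
def cubeUnbalancedCycles : List (List ℕ) :=
  [[0, 1, 3, 2], [4, 5, 7, 6], [0, 2, 6, 4], [1, 3, 7, 5], [0, 1, 5, 4], [2, 3, 7, 6],
    [1, 3, 2, 6, 4, 5], [0, 2, 3, 7, 5, 4], [0, 1, 3, 7, 6, 4], [0, 1, 5, 7, 6, 2]]

def cycleVertex (l : List ℕ) (i : ℕ) : Fin 3 → Bool :=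
  cubeVertex (l.getD (i % l.length) 0)

theorem cubeGraph_adj_cycleVertex : ∀ l ∈ cubeUnbalancedCycles, ∀ i < l.length,
    cubeGraph.Adj (cycleVertex l i) (cycleVertex l (i + 1)) := by
  decide

theorem sum_cubeTwist_cycleVertex : ∀ l ∈ cubeUnbalancedCycles,
    ∑ i ∈ range l.length, (cubeTwist s(cycleVertex l i, cycleVertex l (i + 1)) + 1) = 1 := by
  decide

theorem exists_cubeUnbalancedCycles_avoiding : ∀ p q : Fin 3 → Bool,
    ∃ l ∈ cubeUnbalancedCycles, ∀ i < l.length, cycleVertex l i ≠ p ∧ cycleVertex l i ≠ q := by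
  decide

theorem card_le_five_of_isIndepFinset_twistedCover_cubeTwist
    {S : Finset ((Fin 3 → Bool) × ZMod 2)}
    (hS : IsIndepFinset (twistedCover cubeGraph cubeTwist) S) : S.card ≤ 5 := by
  by_contra! h
  set A := S.image Prod.fst
  have hA : A.card = S.card := card_image_fst_of_isIndepFinset hS
  have hAc : Aᶜ.card ≤ 2 := by
    rw [card_compl, card_cube_vertices]
    omega
  obtain ⟨t, hAt, -, ht⟩ := exists_subsuperset_card_eq (subset_univ Aᶜ) hAc (by simp)
  obtain ⟨p, q, -, rfl⟩ := card_eq_two.1 ht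
  obtain ⟨l, hl, hlpq⟩ := exists_cubeUnbalancedCycles_avoiding p q
  obtain ⟨i, hi, hiA⟩ := hS.exists_notMem_image_fst (c := cycleVertex l) (by simp [cycleVertex])
    (cubeGraph_adj_cycleVertex l hl) (sum_cubeTwist_cycleVertex l hl)
  have := hAt (mem_compl.2 hiA)
  rw [mem_insert, mem_singleton] at this
  exact this.elim (hlpq i hi).1 (hlpq i hi).2

theorem cubeGraph_exists_uncolorable_cover : ∀ m < 3, ∃ (W : Type) (_ : Fintype W)
    (H : SimpleGraph W) (L : (Fin 3 → Bool) → Finset W), DPCover cubeGraph H L ∧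
      (∀ v, (L v).card = m) ∧
      ¬ ∃ S : Finset W, IsIndepFinset H S ∧ S.card = Fintype.card (Fin 3 → Bool)
  | 0, _ => ⟨Empty, inferInstance, ⊥, _, dpCover_empty, fun _ => rfl, fun ⟨S, _, hS⟩ => by
      simp [Subsingleton.elim S ∅] at hS⟩
  | 1, _ => ⟨_, inferInstance, cubeGraph, _, dpCover_self, fun _ => card_singleton _,
      fun ⟨S, hS, hcard⟩ =>
      hS (cubeVertex 0) (eq_univ_of_card S hcard ▸ mem_univ _) (cubeVertex 1)
        (eq_univ_of_card S hcard ▸ mem_univ _) (by decide)⟩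
  | 2, _ => ⟨_, inferInstance, _, _, dpCover_twistedCover cubeTwist, card_twistedCover_fiber,
      fun ⟨S, hS, hcard⟩ => by
        have := card_le_five_of_isIndepFinset_twistedCover_cubeTwist hS
        rw [card_cube_vertices] at hcard
        omega⟩

end Cube

/-- `χ_DP(Q₃) = 3`, `α₂^{DP}(Q₃) = 5`, and `Q₃` is not partially DP-nice. -/
theorem cubeGraph_not_partiallyDPNice :
    chiDP cubeGraph = 3 ∧ alphaDP cubeGraph 2 = 5 ∧ ¬ PartiallyDPNice cubeGraph := by
  have hchi : chiDP cubeGraph = 3 :=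
    chiDP_eq_of (fun _ _ _ _ C hL => cubeGraph_exists_coloring C hL)
      cubeGraph_exists_uncolorable_cover
  have halpha : alphaDP cubeGraph 2 = 5 :=
    alphaDP_eq_of ⟨_, inferInstance, _, _, dpCover_twistedCover cubeTwist, card_twistedCover_fiber,
        fun _ => card_le_five_of_isIndepFinset_twistedCover_cubeTwist⟩
      fun _ _ _ _ C hL => cubeGraph_exists_isIndepFinset_card_five C fun v => (hL v).ge
  refine ⟨hchi, halpha, fun h => ?_⟩
  have := h 2 one_le_two (by rw [hchi]; norm_num)
  rw [hchi, halpha] at this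
  norm_num at this
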